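/- Let 1 ≤ p, q ≤ ∞, m, n ∈ ℕ and D > 0. Suppose there exist signs ε_α ∈ {−1, +1} for α ∈ Λ(m,n) such that sup_{z ∈ B_{ℓ_p^n}} | Σ_{α ∈ Λ(m,n)} ε_α (m!/α!) z^α | ≤ D. Then n^{m(1 − 1/q)} ≤ χ_M(𝒫(^m ℓ_p^n), 𝒫(^m ℓ_q^n)) · D. -/

import Mathlib

open scoped ENNReal NNReal BigOperators

/-- The `ℓ_p` norm on `ℂ^n`, for `p ∈ [1,∞]` (an extended real). -/
noncomputable def lpNorm (p : ℝ≥0∞) {n : ℕ} (z : Fin n → ℂ) : ℝ :=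
  if p = ∞ then ⨆ i, ‖z i‖ else (∑ i, ‖z i‖ ^ p.toReal) ^ (1 / p.toReal)

/-- The closed ball of radius `r` of `ℓ_p^n`. -/
def lpBall (p : ℝ≥0∞) (n : ℕ) (r : ℝ) : Set (Fin n → ℂ) :=
  {z | lpNorm p z ≤ r}

/-- The mixed `(p,q)`-Bohr radius `K(B_{ℓ_p^n}, B_{ℓ_q^n})`: the supremum of all `r ≥ 0`
such that for every entire function `f` on `ℂ^n` with monomial expansion coefficients `a`,
`sup_{z ∈ r·B_{ℓ_q^n}} Σ_α |a_α z^α| ≤ sup_{z ∈ B_{ℓ_p^n}} |f(z)|`. -/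
noncomputable def mixedBohrRadius (p q : ℝ≥0∞) (n : ℕ) : ℝ :=
  sSup {r : ℝ | 0 ≤ r ∧ ∀ (f : (Fin n → ℂ) → ℂ) (a : (Fin n → ℕ) → ℂ),
    (∀ z : Fin n → ℂ, HasSum (fun α : Fin n → ℕ => a α * ∏ i, z i ^ α i) (f z)) →
    ∀ z ∈ lpBall q n r,
      (∑' α : Fin n → ℕ, ((‖a α‖₊ : ℝ≥0∞) * ∏ i, (‖z i‖₊ : ℝ≥0∞) ^ α i))
        ≤ ⨆ w ∈ lpBall p n 1, (‖f w‖₊ : ℝ≥0∞)}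

/-- `Λ(m,n)`, the finite set of multi-indices `α ∈ ℕ_0^n` with `|α| = m`. -/
def Lam (m n : ℕ) : Finset (Fin n → ℕ) := Finset.Nat.antidiagonalTuple n m

/-- The mixed `(p,q)`-unconditional constant `χ_M(𝒫(^m ℓ_p^n), 𝒫(^m ℓ_q^n))`: the least
`λ > 0` such that for all coefficients `a` and unimodular `θ`,
`sup_{z ∈ B_{ℓ_q^n}} |Σ θ_α a_α z^α| ≤ λ · sup_{z ∈ B_{ℓ_p^n}} |Σ a_α z^α|`. -/
noncomputable def unconditionalConst (m : ℕ) (p q : ℝ≥0∞) (n : ℕ) : ℝ :=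
  sInf {l : ℝ | 0 < l ∧ ∀ (a θ : (Fin n → ℕ) → ℂ), (∀ α ∈ Lam m n, ‖θ α‖ = 1) →
    ∀ z ∈ lpBall q n 1,
      ‖∑ α ∈ Lam m n, θ α * a α * ∏ i, z i ^ α i‖ ≤
        l * ⨆ w ∈ lpBall p n 1, ‖∑ α ∈ Lam m n, a α * ∏ i, w i ^ α i‖}

/-- The `m`-homogeneous mixed Bohr radius `K_m(B_{ℓ_p^n}, B_{ℓ_q^n})`: the greatest `r > 0`
such that for every `m`-homogeneous polynomial `P = Σ_{|α|=m} a_α z^α`,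
`sup_{z ∈ r·B_{ℓ_q^n}} Σ |a_α z^α| ≤ sup_{z ∈ B_{ℓ_p^n}} |P(z)|`. -/
noncomputable def homBohrRadius (m : ℕ) (p q : ℝ≥0∞) (n : ℕ) : ℝ :=
  sSup {r : ℝ | 0 < r ∧ ∀ a : (Fin n → ℕ) → ℂ, ∀ z ∈ lpBall q n r,
      ∑ α ∈ Lam m n, ‖a α‖ * ∏ i, ‖z i‖ ^ α i ≤
        ⨆ w ∈ lpBall p n 1, ‖∑ α ∈ Lam m n, a α * ∏ i, w i ^ α i‖}

/-! Test the unconditional estimate on `P = Σ ε_α (m!/α!) z^α` with the unimodular twist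
`θ_α = ε_α`, which removes the signs, at the point `(n^{-1/q}, …, n^{-1/q})` of the unit ball of
`ℓ_q^n`: by the multinomial theorem the twisted polynomial takes the value `(n · n^{-1/q})^m` there.
Since `χ_M` is an infimum (and `sInf ∅ = 0`), one also needs some finite admissible constant. It comes
from the Cauchy estimate `|a_α| n^{-m/p} ≤ sup_{B_{ℓ_p^n}} |P|`, obtained by averaging `P` over the
points `n^{-1/p} (ζ^{k_1}, …, ζ^{k_n})`, `ζ` a primitive `(m+1)`-th root of unity. -/

open Finset

lemma IsPrimitiveRoot.sum_range_pow_mul {K : Type*} [Field K] {ζ : K} {N : ℕ}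
    (hζ : IsPrimitiveRoot ζ N) (e : ℕ) :
    ∑ j ∈ range N, ζ ^ (j * e) = if N ∣ e then (N : K) else 0 := by
  simp_rw [mul_comm _ e, pow_mul]
  split_ifs with h
  · simp [(hζ.pow_eq_one_iff_dvd e).2 h]
  · rw [geom_sum_eq ((hζ.pow_eq_one_iff_dvd e).not.2 h), ← pow_mul, mul_comm, pow_mul,
      hζ.pow_eq_one, one_pow, sub_self, zero_div]

lemma succ_dvd_add_succ_sub_iff {d b c : ℕ} (hb : b ≤ d) (hc : c ≤ d) :
    d + 1 ∣ b + (d + 1 - c) ↔ b = c := by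
  refine ⟨fun h => ?_, fun h => by rw [h, Nat.add_sub_cancel' (by omega)]⟩
  have := Nat.eq_of_dvd_of_lt_two_mul (by omega) h (by omega)
  omega

section Torus

variable {n d : ℕ} {s : Finset (Fin n → ℕ)} {ζ : ℂ}

-- `ζ ^ (k * (d + 1 - α))` is `ζ ^ (-k α)` written with a natural exponent.
lemma sum_piFinset_mul_sum_eq (hζ : IsPrimitiveRoot ζ (d + 1)) (hs : ∀ β ∈ s, ∀ i, β i ≤ d)
    (a : (Fin n → ℕ) → ℂ) {α : Fin n → ℕ} (hα : α ∈ s) (r : ℂ) :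
    ∑ k ∈ Fintype.piFinset fun _ => range (d + 1), (∏ i, ζ ^ (k i * (d + 1 - α i))) *
        ∑ β ∈ s, a β * ∏ i, (r * ζ ^ k i) ^ β i =
      (d + 1) ^ n * r ^ (∑ i, α i) * a α := by
  have hterm : ∀ β ∈ s, ∀ k : Fin n → ℕ, (∏ i, ζ ^ (k i * (d + 1 - α i))) *
      (a β * ∏ i, (r * ζ ^ k i) ^ β i) =
        a β * r ^ (∑ i, β i) * ∏ i, ζ ^ (k i * (β i + (d + 1 - α i))) := by
    intro β _ k
    simp only [mul_pow, prod_mul_distrib, prod_pow_eq_pow_sum, ← pow_mul, mul_add, pow_add]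
    ring
  calc _ = ∑ β ∈ s, a β * r ^ (∑ i, β i) *
          ∏ i, ∑ j ∈ range (d + 1), ζ ^ (j * (β i + (d + 1 - α i))) := by
        simp_rw [mul_sum]
        rw [sum_comm]
        refine sum_congr rfl fun β hβ => ?_
        rw [prod_univ_sum, mul_sum]
        exact sum_congr rfl fun k _ => hterm β hβ k
    _ = ∑ β ∈ s, a β * r ^ (∑ i, β i) * if β = α then ((d : ℂ) + 1) ^ n else 0 := by
        refine sum_congr rfl fun β hβ => ?_
        have hβα : (∀ i ∈ univ, β i = α i) ↔ β = α := by simp [funext_iff]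
        simp only [hζ.sum_range_pow_mul, succ_dvd_add_succ_sub_iff (hs β hβ _) (hs α hα _),
          prod_ite_zero, hβα, prod_const, card_univ, Fintype.card_fin]
        push_cast
        rfl
    _ = _ := by simp only [mul_ite, mul_zero, sum_ite_eq', if_pos hα]; ring

lemma norm_coeff_mul_pow_le (hs : ∀ β ∈ s, ∀ i, β i ≤ d) (a : (Fin n → ℕ) → ℂ)
    {α : Fin n → ℕ} (hα : α ∈ s) {r M : ℝ} (hr : 0 ≤ r)
    (hM : ∀ w : Fin n → ℂ, (∀ i, ‖w i‖ = r) → ‖∑ β ∈ s, a β * ∏ i, w i ^ β i‖ ≤ M) :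
    ‖a α‖ * r ^ (∑ i, α i) ≤ M := by
  have hζ := Complex.isPrimitiveRoot_exp (d + 1) d.succ_ne_zero
  set ζ := Complex.exp (2 * Real.pi * Complex.I / ↑(d + 1))
  have hζ1 : ∀ j : ℕ, ‖ζ ^ j‖ = 1 := fun j => by rw [norm_pow, hζ.norm'_eq_one d.succ_ne_zero, one_pow]
  refine le_of_mul_le_mul_left (a := ((d : ℝ) + 1) ^ n) ?_ (by positivity)
  calc ((d : ℝ) + 1) ^ n * (‖a α‖ * r ^ (∑ i, α i))
      = ‖((d : ℂ) + 1) ^ n * (r : ℂ) ^ (∑ i, α i) * a α‖ := by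
        have hd : ‖(d : ℂ) + 1‖ = d + 1 := by exact_mod_cast Complex.norm_natCast (d + 1)
        rw [norm_mul, norm_mul, norm_pow, norm_pow, Complex.norm_real, Real.norm_of_nonneg hr, hd]
        ring
    _ ≤ ∑ k ∈ Fintype.piFinset fun _ => range (d + 1), ‖(∏ i, ζ ^ (k i * (d + 1 - α i))) *
          ∑ β ∈ s, a β * ∏ i, ((r : ℂ) * ζ ^ k i) ^ β i‖ := by
        rw [← sum_piFinset_mul_sum_eq hζ hs a hα]
        exact norm_sum_le _ _
    _ ≤ ∑ _k ∈ Fintype.piFinset fun _ : Fin n => range (d + 1), M := by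
        refine sum_le_sum fun k _ => ?_
        rw [norm_mul, norm_prod, prod_eq_one fun i _ => hζ1 _, one_mul]
        refine hM _ fun i => ?_
        rw [norm_mul, hζ1, mul_one, Complex.norm_real, Real.norm_of_nonneg hr]
    _ = ((d : ℝ) + 1) ^ n * M := by simp
end Torus

section LpBall

variable {p : ℝ≥0∞} {n : ℕ} {z : Fin n → ℂ}

lemma lpNorm_eq_norm_toLp [Fact (1 ≤ p)] (z : Fin n → ℂ) : lpNorm p z = ‖WithLp.toLp p z‖ := by
  unfold lpNorm
  split_ifs with hp
  · subst hp
    rfl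
  · rw [PiLp.norm_eq_sum (ENNReal.toReal_pos (zero_lt_one.trans_le Fact.out).ne' hp)]

lemma norm_le_one_of_mem_lpBall (hp : 1 ≤ p) (hz : z ∈ lpBall p n 1) (i : Fin n) :
    ‖z i‖ ≤ 1 := by
  have := Fact.mk hp
  exact (PiLp.norm_apply_le (WithLp.toLp p z) i).trans ((lpNorm_eq_norm_toLp z).symm.trans_le hz)

lemma mem_lpBall_one_of_norm_le (h : ∀ i, ‖z i‖ ≤ (n : ℝ) ^ (-(1 / p.toReal))) :
    z ∈ lpBall p n 1 := by
  unfold lpBall lpNorm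
  split_ifs with hp
  · simp only [hp, ENNReal.toReal_top, div_zero, neg_zero, Real.rpow_zero] at h
    exact Real.iSup_le h zero_le_one
  · rcases (ENNReal.toReal_nonneg (a := p)).eq_or_lt with h0 | h0
    · simp [← h0]
    · have hpow : ((n : ℝ) ^ (-(1 / p.toReal))) ^ p.toReal = (n : ℝ)⁻¹ := by
        rw [← Real.rpow_mul n.cast_nonneg, neg_mul, one_div_mul_cancel h0.ne', Real.rpow_neg_one]
      refine Real.rpow_le_one (sum_nonneg fun i _ => by positivity) ?_ (by positivity)
      calc ∑ i, ‖z i‖ ^ p.toReal ≤ ∑ _i : Fin n, (n : ℝ)⁻¹ :=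
            sum_le_sum fun i _ => hpow ▸ Real.rpow_le_rpow (norm_nonneg _) (h i) h0.le
        _ ≤ 1 := by simpa using mul_inv_le_one

end LpBall

lemma norm_sum_mul_prod_pow_le {n : ℕ} (s : Finset (Fin n → ℕ)) (b : (Fin n → ℕ) → ℂ)
    {z : Fin n → ℂ} (hz : ∀ i, ‖z i‖ ≤ 1) :
    ‖∑ α ∈ s, b α * ∏ i, z i ^ α i‖ ≤ ∑ α ∈ s, ‖b α‖ :=
  (norm_sum_le _ _).trans <| sum_le_sum fun α _ => by
    rw [norm_mul, norm_prod]
    refine mul_le_of_le_one_right (norm_nonneg _) (prod_le_one (fun _ _ => norm_nonneg _) ?_)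
    exact fun i _ => norm_pow (z i) (α i) ▸ pow_le_one₀ (norm_nonneg _) (hz i)

lemma mem_Lam {m n : ℕ} {α : Fin n → ℕ} : α ∈ Lam m n ↔ ∑ i, α i = m :=
  Finset.Nat.mem_antidiagonalTuple

lemma le_of_mem_Lam {m n : ℕ} {α : Fin n → ℕ} (hα : α ∈ Lam m n) (i : Fin n) : α i ≤ m :=
  mem_Lam.1 hα ▸ single_le_sum (fun j _ => Nat.zero_le (α j)) (mem_univ i)

lemma sum_Lam_factorial_div (m n : ℕ) :
    ∑ α ∈ Lam m n, (m.factorial : ℂ) / ((∏ i, (α i).factorial : ℕ) : ℂ) = (n : ℂ) ^ m := by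
  have h := sum_pow_eq_sum_piAntidiag univ (fun _ : Fin n => (1 : ℂ)) m
  simp only [sum_const, card_univ, Fintype.card_fin, nsmul_eq_mul, mul_one, one_pow,
    prod_const_one] at h
  rw [h, piAntidiag_univ_fin_eq_antidiagonalTuple]
  refine sum_congr rfl fun α hα => ?_
  have hspec := Nat.multinomial_spec univ α
  rw [Finset.Nat.mem_antidiagonalTuple.1 hα] at hspec
  rw [div_eq_iff (by exact_mod_cast (Nat.prod_factorial_pos univ α).ne'), mul_comm]
  exact_mod_cast hspec.symm

section PolySup

variable {m n : ℕ} {p : ℝ≥0∞}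

noncomputable def polySup (m : ℕ) (p : ℝ≥0∞) {n : ℕ} (a : (Fin n → ℕ) → ℂ) : ℝ :=
  ⨆ w ∈ lpBall p n 1, ‖∑ α ∈ Lam m n, a α * ∏ i, w i ^ α i‖

lemma polySup_nonneg (a : (Fin n → ℕ) → ℂ) : 0 ≤ polySup m p a :=
  Real.iSup_nonneg fun _ => Real.iSup_nonneg fun _ => norm_nonneg _

lemma polySup_le {a : (Fin n → ℕ) → ℂ} {D : ℝ} (hD : 0 ≤ D)
    (h : ∀ w ∈ lpBall p n 1, ‖∑ α ∈ Lam m n, a α * ∏ i, w i ^ α i‖ ≤ D) :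
    polySup m p a ≤ D :=
  Real.iSup_le (fun w => Real.iSup_le (h w) hD) hD

lemma le_polySup (hp : 1 ≤ p) (a : (Fin n → ℕ) → ℂ) {w : Fin n → ℂ} (hw : w ∈ lpBall p n 1) :
    ‖∑ α ∈ Lam m n, a α * ∏ i, w i ^ α i‖ ≤ polySup m p a := by
  have hbdd : BddAbove (Set.range fun w : Fin n → ℂ => ⨆ _ : w ∈ lpBall p n 1,
      ‖∑ α ∈ Lam m n, a α * ∏ i, w i ^ α i‖) := by
    refine ⟨∑ α ∈ Lam m n, ‖a α‖, Set.forall_mem_range.2 fun w => ?_⟩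
    refine Real.iSup_le (fun hw => ?_) (sum_nonneg fun _ _ => norm_nonneg _)
    exact norm_sum_mul_prod_pow_le _ a (norm_le_one_of_mem_lpBall hp hw)
  exact (ciSup_pos hw).symm.trans_le (le_ciSup hbdd w)

lemma norm_coeff_mul_pow_le_polySup (hp : 1 ≤ p) (a : (Fin n → ℕ) → ℂ) {α : Fin n → ℕ}
    (hα : α ∈ Lam m n) : ‖a α‖ * ((n : ℝ) ^ (-(1 / p.toReal))) ^ m ≤ polySup m p a := by
  have h := norm_coeff_mul_pow_le (fun β hβ => le_of_mem_Lam hβ) a hα (by positivity)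
    fun _ hw => le_polySup hp a (mem_lpBall_one_of_norm_le fun i => (hw i).le)
  rwa [mem_Lam.1 hα] at h

end PolySup

section Unconditional

variable {m n : ℕ} {p q : ℝ≥0∞}

def IsUnconditionalBound (m : ℕ) (p q : ℝ≥0∞) (n : ℕ) (l : ℝ) : Prop :=
  ∀ (a θ : (Fin n → ℕ) → ℂ), (∀ α ∈ Lam m n, ‖θ α‖ = 1) → ∀ z ∈ lpBall q n 1,
    ‖∑ α ∈ Lam m n, θ α * a α * ∏ i, z i ^ α i‖ ≤ l * polySup m p a

lemma unconditionalConst_eq_sInf :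
    unconditionalConst m p q n = sInf {l | 0 < l ∧ IsUnconditionalBound m p q n l} :=
  rfl

lemma exists_isUnconditionalBound (hp : 1 ≤ p) (hq : 1 ≤ q) (hn : 0 < n) (m : ℕ) :
    ∃ l, 0 < l ∧ IsUnconditionalBound m p q n l := by
  set c := ((n : ℝ) ^ (-(1 / p.toReal))) ^ m
  have hc : 0 < c := pow_pos (Real.rpow_pos_of_pos (Nat.cast_pos.2 hn) _) m
  refine ⟨#(Lam m n) * c⁻¹ + 1, by positivity, fun a θ hθ z hz => ?_⟩
  have ha := polySup_nonneg (m := m) (p := p) a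
  calc ‖∑ α ∈ Lam m n, θ α * a α * ∏ i, z i ^ α i‖
      ≤ ∑ α ∈ Lam m n, ‖θ α * a α‖ :=
        norm_sum_mul_prod_pow_le _ (fun α => θ α * a α) (norm_le_one_of_mem_lpBall hq hz)
    _ = ∑ α ∈ Lam m n, ‖a α‖ := sum_congr rfl fun α hα => by rw [norm_mul, hθ α hα, one_mul]
    _ ≤ ∑ _α ∈ Lam m n, c⁻¹ * polySup m p a := sum_le_sum fun α hα =>
        (le_inv_mul_iff₀ hc).2 (mul_comm c _ ▸ norm_coeff_mul_pow_le_polySup hp a hα)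
    _ ≤ (#(Lam m n) * c⁻¹ + 1) * polySup m p a := by
        rw [sum_const, nsmul_eq_mul, ← mul_assoc]
        nlinarith

lemma rpow_le_mul_of_isUnconditionalBound (hn : 0 < n) {ε : (Fin n → ℕ) → ℝ}
    (hε : ∀ α ∈ Lam m n, ε α = 1 ∨ ε α = -1) {D l : ℝ}
    (hD : polySup m p
      (fun α => (ε α : ℂ) * ((m.factorial : ℂ) / ((∏ i, (α i).factorial : ℕ) : ℂ))) ≤ D)
    (hl : 0 ≤ l) (hbound : IsUnconditionalBound m p q n l) :
    (n : ℝ) ^ ((m : ℝ) * (1 - 1 / q.toReal)) ≤ l * D := by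
  have hn' : (0 : ℝ) < n := Nat.cast_pos.2 hn
  set t := (n : ℝ) ^ (-(1 / q.toReal))
  have ht : 0 ≤ t := by positivity
  have hz : (fun _ => (t : ℂ)) ∈ lpBall q n 1 :=
    mem_lpBall_one_of_norm_le fun _ => by rw [Complex.norm_real, Real.norm_of_nonneg ht]
  have hθ : ∀ α ∈ Lam m n, ‖(ε α : ℂ)‖ = 1 := fun α hα => by
    rcases hε α hα with h | h <;> simp [h]
  have hsum : ∑ α ∈ Lam m n, (ε α : ℂ) *
      ((ε α : ℂ) * ((m.factorial : ℂ) / ((∏ i, (α i).factorial : ℕ) : ℂ))) * ∏ i, (t : ℂ) ^ α i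
      = (n : ℂ) ^ m * (t : ℂ) ^ m := by
    rw [← sum_Lam_factorial_div, sum_mul]
    refine sum_congr rfl fun α hα => ?_
    have hεε : (ε α : ℂ) * ε α = 1 := by rcases hε α hα with h | h <;> simp [h]
    rw [prod_pow_eq_pow_sum, mem_Lam.1 hα]
    linear_combination ((m.factorial : ℂ) / ((∏ i, (α i).factorial : ℕ) : ℂ) * (t : ℂ) ^ m) * hεε
  calc (n : ℝ) ^ ((m : ℝ) * (1 - 1 / q.toReal)) = (n : ℝ) ^ m * t ^ m := by
        rw [← mul_pow, mul_comm, Real.rpow_mul hn'.le, Real.rpow_natCast, sub_eq_add_neg,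
          Real.rpow_add hn', Real.rpow_one]
    _ = ‖(n : ℂ) ^ m * (t : ℂ) ^ m‖ := by
        rw [norm_mul, norm_pow, norm_pow, Complex.norm_natCast, Complex.norm_real,
          Real.norm_of_nonneg ht]
    _ ≤ l * polySup m p _ := hsum ▸ hbound _ _ hθ _ hz
    _ ≤ l * D := mul_le_mul_of_nonneg_left hD hl

end Unconditional

theorem rpow_le_unconditionalConst_mul_general (p q : ℝ≥0∞) (hp : 1 ≤ p) (hq : 1 ≤ q)
    (m n : ℕ) (hn : 1 ≤ n) (D : ℝ) (hD : 0 < D)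
    (ε : (Fin n → ℕ) → ℝ) (hε : ∀ α ∈ Lam m n, ε α = 1 ∨ ε α = -1)
    (hsup : ∀ z ∈ lpBall p n 1,
      ‖∑ α ∈ Lam m n,
          (ε α : ℂ) * ((m.factorial : ℂ) / ((∏ i, (α i).factorial : ℕ) : ℂ)) *
            ∏ i, z i ^ α i‖ ≤ D) :
    (n : ℝ) ^ ((m : ℝ) * (1 - 1/q.toReal)) ≤ unconditionalConst m p q n * D := by
  obtain ⟨l₀, hl₀, hbound₀⟩ := exists_isUnconditionalBound hp hq hn m
  rw [unconditionalConst_eq_sInf, ← div_le_iff₀ hD]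
  refine le_csInf ⟨l₀, hl₀, hbound₀⟩ fun l ⟨hl, hbound⟩ => (div_le_iff₀ hD).2 ?_
  exact rpow_le_mul_of_isUnconditionalBound hn hε (polySup_le hD.le hsup) hl.le hbound

/-- If there are signs `ε_α ∈ {−1,+1}` with
`sup_{z ∈ B_{ℓ_p^n}} |Σ_{α ∈ Λ(m,n)} ε_α (m!/α!) z^α| ≤ D`, then
`n^(m(1 − 1/q)) ≤ χ_M(𝒫(^m ℓ_p^n), 𝒫(^m ℓ_q^n)) · D`. -/
theorem rpow_le_unconditionalConst_mul (p q : ℝ≥0∞) (hp : 1 ≤ p) (hq : 1 ≤ q)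
    (m n : ℕ) (hm : 1 ≤ m) (hn : 1 ≤ n) (D : ℝ) (hD : 0 < D)
    (ε : (Fin n → ℕ) → ℝ) (hε : ∀ α ∈ Lam m n, ε α = 1 ∨ ε α = -1)
    (hsup : ∀ z ∈ lpBall p n 1,
      ‖∑ α ∈ Lam m n,
          (ε α : ℂ) * ((m.factorial : ℂ) / ((∏ i, (α i).factorial : ℕ) : ℂ)) *
            ∏ i, z i ^ α i‖ ≤ D) :
    (n : ℝ) ^ ((m : ℝ) * (1 - 1/q.toReal)) ≤ unconditionalConst m p q n * D :=
  rpow_le_unconditionalConst_mul_general p q hp hq m n hn D hD ε hε hsup
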